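/- arXiv:math/0302067 — 2 statements merged into one kernel-verified Lean document; each statement's English description precedes it below -/
import Mathlib

section
/- Let g be a Lie algebra equipped with a symmetric invariant tensor t ∈ S²(g)^g, and set Z = (1/4)[t^{1,2}, t^{2,3}] ∈ g^{⊗3}. Define Z_n = Sym_{2,...,2n}([Z^{1,2,3},[Z^{3,4,5},...,Z^{2n-1,2n,2n+1}]]) and Z^{(n)}(λ) = ⟨Z_n, id ⊗ λ ⊗ ... ⊗ λ ⊗ id⟩ (contracting the middle 2n-1 slots with λ). Then for all λ ∈ g*, 4^n Z^{(n)}(λ) = (ad(t^∨(λ)) acting on the second tensor factor)^{2n-1}(t). -/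
open TensorProduct

/- STATEMENT 3: For `t ∈ S²(g)^g` and `Z = (1/4)[t^{1,2},t^{2,3}]`, the
contractions `Z^{(n)}(λ) = ⟨Z_n, id⊗λ⊗…⊗λ⊗id⟩` satisfy
`4^n Z^{(n)}(λ) = (1 ⊗ ad t^∨(λ))^{2n-1}(t)`.

Here `Z_n = Sym_{2,…,2n}([Z^{1,2,3},[Z^{3,4,5},…,Z^{2n-1,2n,2n+1}]])`.  Since
`⟨·, id⊗λ⊗…⊗λ⊗id⟩` is symmetric in the middle slots, the symmetrization is
transparent for the contraction, and we compute `⟨Z_n, id⊗λ⊗…⊗λ⊗id⟩`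
recursively: contracting `[Z^{1,2,3}, W^{3,…,2n+1}]` with `λ` in the middle
slots applies to the contraction of `W` the operator `A_λ ⊗ 1` on `g ⊗ g`,
where `A_λ(d) = ⟨Z, id ⊗ λ ⊗ λ([·,d])⟩`.  The element `[t^{1,2},t^{2,3}]` of
`g^{⊗3} ⊂ U(g)^{⊗3}` is `κ(t ⊗ t)` for `κ((a⊗b)⊗(c⊗d)) = a⊗[b,c]⊗d`. -/

variable (g : Type*) [LieRing g] [LieAlgebra ℂ g]

noncomputable def adLin : g →ₗ[ℂ] g →ₗ[ℂ] g := (LieAlgebra.ad ℂ g : g →ₗ[ℂ] Module.End ℂ g)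

/-- `t^∨(λ) = (λ ⊗ id)(t)`. -/
noncomputable def tvee (t : g ⊗[ℂ] g) (lam : Module.Dual ℂ g) : g :=
  TensorProduct.lid ℂ g (TensorProduct.map lam LinearMap.id t)

/-- the operator `1 ⊗ ad x` on `g ⊗ g`. -/
noncomputable def oneAd (x : g) : g ⊗[ℂ] g →ₗ[ℂ] g ⊗[ℂ] g :=
  LinearMap.lTensor g (adLin g x)

/-- `A_λ : g →ₗ g`, `A_λ(d) = Σ λ(y_i) λ([z_i,d]) x_i` for `Z = Σ x_i⊗y_i⊗z_i`. -/
noncomputable def Aop (lam : Module.Dual ℂ g) : g ⊗[ℂ] (g ⊗[ℂ] g) →ₗ[ℂ] (g →ₗ[ℂ] g) :=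
  TensorProduct.lift
    ((LinearMap.smulRightₗ ∘ₗ
        TensorProduct.lift
          (((LinearMap.lsmul ℂ (Module.Dual ℂ g)) ∘ₗ lam).compl₂
            ((LinearMap.llcomp ℂ g g ℂ lam) ∘ₗ adLin g))).flip)

/-- contraction of the middle slot of `g⊗g⊗g` with `λ`. -/
noncomputable def cmid (lam : Module.Dual ℂ g) :
    g ⊗[ℂ] (g ⊗[ℂ] g) →ₗ[ℂ] g ⊗[ℂ] g :=
  LinearMap.lTensor g
    ((TensorProduct.lid ℂ g).toLinearMap ∘ₗ TensorProduct.map lam LinearMap.id)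

/-- `Z^{(n)}(λ) = ⟨Z_n, id⊗λ⊗…⊗λ⊗id⟩`, computed recursively. -/
noncomputable def Zcontr (lam : Module.Dual ℂ g) (Z : g ⊗[ℂ] (g ⊗[ℂ] g)) (n : ℕ) :
    g ⊗[ℂ] g :=
  (LinearMap.rTensor g (Aop g lam Z))^[n - 1] (cmid g lam Z)

/-- `κ : (g⊗g)⊗(g⊗g) → g⊗g⊗g`, `(a⊗b)⊗(c⊗d) ↦ a⊗[b,c]⊗d`; thus
`[t^{1,2},t^{2,3}] = κ(t⊗t)`. -/
noncomputable def kap : (g ⊗[ℂ] g) ⊗[ℂ] (g ⊗[ℂ] g) →ₗ[ℂ] g ⊗[ℂ] (g ⊗[ℂ] g) :=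
  TensorProduct.lift (TensorProduct.lift
    ((((LinearMap.llcomp ℂ (g ⊗[ℂ] g) (g ⊗[ℂ] g) (g ⊗[ℂ] (g ⊗[ℂ] g))) ∘ₗ
        (TensorProduct.mk ℂ g (g ⊗[ℂ] g))).compl₂
      ((LinearMap.rTensorHom g) ∘ₗ adLin g))))

-- contraction of first / second slot
noncomputable def c1 (lam : Module.Dual ℂ g) : g ⊗[ℂ] g →ₗ[ℂ] g :=
  (TensorProduct.lid ℂ g).toLinearMap ∘ₗ TensorProduct.map lam LinearMap.id

noncomputable def c2 (lam : Module.Dual ℂ g) : g ⊗[ℂ] g →ₗ[ℂ] g :=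
  (TensorProduct.rid ℂ g).toLinearMap ∘ₗ TensorProduct.map LinearMap.id lam

section AuxLemmas

variable {g}

lemma c1_tmul (lam : Module.Dual ℂ g) (a b : g) : c1 g lam (a ⊗ₜ[ℂ] b) = lam a • b := by
  simp [c1]

lemma c2_tmul (lam : Module.Dual ℂ g) (a b : g) : c2 g lam (a ⊗ₜ[ℂ] b) = lam b • a := by
  simp [c2]

lemma adLin_apply (x y : g) : adLin g x y = ⁅x, y⁆ := rfl

lemma tvee_eq_c1 (t : g ⊗[ℂ] g) (lam : Module.Dual ℂ g) : tvee g t lam = c1 g lam t := rfl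

lemma c1_lT (lam : Module.Dual ℂ g) (f : g →ₗ[ℂ] g) (u : g ⊗[ℂ] g) :
    c1 g lam (LinearMap.lTensor g f u) = f (c1 g lam u) := by
  induction u using TensorProduct.induction_on with
  | zero => simp
  | tmul a b => simp [c1]
  | add u v hu hv => simp [map_add, hu, hv]

lemma c2_rT (lam : Module.Dual ℂ g) (f : g →ₗ[ℂ] g) (u : g ⊗[ℂ] g) :
    c2 g lam (LinearMap.rTensor g f u) = f (c2 g lam u) := by
  induction u using TensorProduct.induction_on with
  | zero => simp
  | tmul a b => simp [c2]
  | add u v hu hv => simp [map_add, hu, hv]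

lemma c2_lT (lam : Module.Dual ℂ g) (f : g →ₗ[ℂ] g) (u : g ⊗[ℂ] g) :
    c2 g lam (LinearMap.lTensor g f u) = c2 g (lam ∘ₗ f) u := by
  induction u using TensorProduct.induction_on with
  | zero => simp
  | tmul a b => simp [c2]
  | add u v hu hv => simp [map_add, hu, hv]

lemma c2_comm (lam : Module.Dual ℂ g) (u : g ⊗[ℂ] g) :
    c2 g lam u = c1 g lam (TensorProduct.comm ℂ g g u) := by
  induction u using TensorProduct.induction_on with
  | zero => simp
  | tmul a b => simp [c1, c2]
  | add u v hu hv => simp [map_add, hu, hv]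

lemma kap_tmul (a b : g) (u : g ⊗[ℂ] g) :
    kap g ((a ⊗ₜ[ℂ] b) ⊗ₜ[ℂ] u) = a ⊗ₜ[ℂ] LinearMap.rTensor g (adLin g b) u := rfl

lemma cmid_tmul (lam : Module.Dual ℂ g) (a : g) (w : g ⊗[ℂ] g) :
    cmid g lam (a ⊗ₜ[ℂ] w) = a ⊗ₜ[ℂ] c1 g lam w := rfl

lemma Aop_tmul_apply (lam : Module.Dual ℂ g) (a : g) (w : g ⊗[ℂ] g) (e : g) :
    Aop g lam (a ⊗ₜ[ℂ] w) e = -(lam ⁅e, c1 g lam w⁆) • a := by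
  induction w using TensorProduct.induction_on with
  | zero => simp
  | tmul y z =>
      simp [Aop, c1, adLin, LieAlgebra.ad_apply, LinearMap.smulRightₗ, smul_smul]
      rw [← lie_skew e z, map_neg, mul_neg, neg_smul, neg_neg]
  | add u v hu hv =>
      simp only [tmul_add, map_add, LinearMap.add_apply, hu, hv, lie_add, map_add, neg_add,
        add_smul]

section Main

variable (t : g ⊗[ℂ] g) (lam : Module.Dual ℂ g)

lemma hinvR (hinv : ∀ x : g,
      LinearMap.rTensor g (adLin g x) t + LinearMap.lTensor g (adLin g x) t = 0) (y : g) :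
    LinearMap.rTensor g (adLin g y) t = -LinearMap.lTensor g (adLin g y) t :=
  eq_neg_of_add_eq_zero_left (hinv y)

lemma hinvL (hinv : ∀ x : g,
      LinearMap.rTensor g (adLin g x) t + LinearMap.lTensor g (adLin g x) t = 0) (y : g) :
    LinearMap.lTensor g (adLin g y) t = -LinearMap.rTensor g (adLin g y) t :=
  eq_neg_of_add_eq_zero_right (hinv y)

lemma key1 (hinv : ∀ x : g,
      LinearMap.rTensor g (adLin g x) t + LinearMap.lTensor g (adLin g x) t = 0) (b : g) :
    c1 g lam (LinearMap.rTensor g (adLin g b) t) = ⁅tvee g t lam, b⁆ := by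
  rw [hinvR t hinv b, map_neg, c1_lT, tvee_eq_c1]
  rw [show adLin g b (c1 g lam t) = ⁅b, c1 g lam t⁆ from rfl, ← lie_skew, neg_neg]

lemma c2t (hsym : TensorProduct.comm ℂ g g t = t) (mu : Module.Dual ℂ g) :
    c2 g mu t = c1 g mu t := by
  rw [c2_comm, hsym]

lemma key2 (hsym : TensorProduct.comm ℂ g g t = t)
    (hinv : ∀ x : g,
      LinearMap.rTensor g (adLin g x) t + LinearMap.lTensor g (adLin g x) t = 0) (e : g) :
    c2 g (lam ∘ₗ adLin g e) t = -⁅e, tvee g t lam⁆ := by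
  rw [← c2_lT, hinvL t hinv e, map_neg, c2_rT, c2t t hsym lam, tvee_eq_c1]
  rfl

lemma key3 (hsym : TensorProduct.comm ℂ g g t = t)
    (hinv : ∀ x : g,
      LinearMap.rTensor g (adLin g x) t + LinearMap.lTensor g (adLin g x) t = 0) (e : g) :
    c2 g ((lam ∘ₗ adLin g e) ∘ₗ adLin g (tvee g t lam)) t
      = ⁅tvee g t lam, ⁅e, tvee g t lam⁆⁆ := by
  rw [← c2_lT, hinvL t hinv, map_neg, c2_rT, key2 t lam hsym hinv e]
  rw [show ∀ y : g, adLin g (tvee g t lam) y = ⁅tvee g t lam, y⁆ from fun _ => rfl]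
  simp

lemma lemB (hinv : ∀ x : g,
      LinearMap.rTensor g (adLin g x) t + LinearMap.lTensor g (adLin g x) t = 0) :
    cmid g lam (kap g (t ⊗ₜ[ℂ] t)) = oneAd g (tvee g t lam) t := by
  have main : ∀ u : g ⊗[ℂ] g,
      cmid g lam (kap g (u ⊗ₜ[ℂ] t)) = oneAd g (tvee g t lam) u := by
    intro u
    induction u using TensorProduct.induction_on with
    | zero => rw [zero_tmul]; simp
    | tmul a b =>
        rw [kap_tmul, cmid_tmul, key1 t lam hinv b]
        simp [oneAd, adLin, LieAlgebra.ad_apply]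
    | add u v hu hv => rw [add_tmul]; simp [map_add, hu, hv]
  exact main t

lemma lemA (hsym : TensorProduct.comm ℂ g g t = t)
    (hinv : ∀ x : g,
      LinearMap.rTensor g (adLin g x) t + LinearMap.lTensor g (adLin g x) t = 0) :
    Aop g lam (kap g (t ⊗ₜ[ℂ] t))
      = adLin g (tvee g t lam) ∘ₗ adLin g (tvee g t lam) := by
  ext e
  have main : ∀ u : g ⊗[ℂ] g,
      Aop g lam (kap g (u ⊗ₜ[ℂ] t)) e
        = -(c2 g ((lam ∘ₗ adLin g e) ∘ₗ adLin g (tvee g t lam)) u) := by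
    intro u
    induction u using TensorProduct.induction_on with
    | zero => rw [zero_tmul]; simp
    | tmul a b =>
        rw [kap_tmul, Aop_tmul_apply, key1 t lam hinv b, c2_tmul]
        simp [adLin, LieAlgebra.ad_apply]
    | add u v hu hv => rw [add_tmul]; simp [map_add, hu, hv]; abel
  rw [main t, key3 t lam hsym hinv e]
  simp only [LinearMap.comp_apply, adLin_apply]
  rw [← lie_skew e (tvee g t lam), lie_neg, neg_neg]

end Main

section Iter

variable {M : Type*} [AddCommGroup M] [Module ℂ M]

lemma iter_smul (φ : M →ₗ[ℂ] M) (n : ℕ) (c : ℂ) (v : M) :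
    (⇑φ)^[n] (c • v) = c • (⇑φ)^[n] v := by
  rw [← Module.End.pow_apply, ← Module.End.pow_apply, map_smul]

lemma iter_neg (φ : M →ₗ[ℂ] M) (n : ℕ) (v : M) :
    (⇑φ)^[n] (-v) = -(⇑φ)^[n] v := by
  rw [← Module.End.pow_apply, ← Module.End.pow_apply, map_neg]

lemma smul_iter (φ : M →ₗ[ℂ] M) (c : ℂ) (n : ℕ) (v : M) :
    (⇑(c • φ))^[n] v = c ^ n • (⇑φ)^[n] v := by
  induction n generalizing v with
  | zero => simp
  | succ n ih =>
      rw [Function.iterate_succ_apply, Function.iterate_succ_apply (⇑φ),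
        LinearMap.smul_apply, ih, iter_smul, smul_smul, pow_succ]

end Iter

lemma rT_lT (f h : g →ₗ[ℂ] g) (u : g ⊗[ℂ] g) :
    LinearMap.rTensor g f (LinearMap.lTensor g h u)
      = LinearMap.lTensor g h (LinearMap.rTensor g f u) := by
  rw [← LinearMap.comp_apply, ← LinearMap.comp_apply, LinearMap.rTensor_comp_lTensor,
    LinearMap.lTensor_comp_rTensor]

lemma rT_iter (f h : g →ₗ[ℂ] g) (k : ℕ) (u : g ⊗[ℂ] g) :
    LinearMap.rTensor g f ((⇑(LinearMap.lTensor g h))^[k] u)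
      = (⇑(LinearMap.lTensor g h))^[k] (LinearMap.rTensor g f u) := by
  induction k generalizing u with
  | zero => rfl
  | succ k ih =>
      rw [Function.iterate_succ_apply, ih, rT_lT, ← Function.iterate_succ_apply]

lemma rT_smul (c : ℂ) (f : g →ₗ[ℂ] g) :
    LinearMap.rTensor g (c • f) = c • LinearMap.rTensor g f :=
  map_smul (LinearMap.rTensorHom g) c f

lemma lemD (t : g ⊗[ℂ] g)
    (hinv : ∀ x : g,
      LinearMap.rTensor g (adLin g x) t + LinearMap.lTensor g (adLin g x) t = 0)
    (y : g) (k : ℕ) :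
    LinearMap.rTensor g (adLin g y) ((⇑(oneAd g y))^[k] t)
      = -((⇑(oneAd g y))^[k + 1] t) := by
  rw [show oneAd g y = LinearMap.lTensor g (adLin g y) from rfl]
  rw [rT_iter, hinvR t hinv y, iter_neg, ← Function.iterate_succ_apply]

lemma lemE (t : g ⊗[ℂ] g)
    (hinv : ∀ x : g,
      LinearMap.rTensor g (adLin g x) t + LinearMap.lTensor g (adLin g x) t = 0)
    (y : g) (k : ℕ) :
    LinearMap.rTensor g (adLin g y ∘ₗ adLin g y) ((⇑(oneAd g y))^[k] t)
      = (⇑(oneAd g y))^[k + 2] t := by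
  rw [LinearMap.rTensor_comp, LinearMap.comp_apply, lemD t hinv y k, map_neg,
    lemD t hinv y (k + 1), neg_neg]

end AuxLemmas

theorem stmt_3 [FiniteDimensional ℂ g] (t : g ⊗[ℂ] g)
    (hsym : TensorProduct.comm ℂ g g t = t)
    (hinv : ∀ x : g,
      LinearMap.rTensor g (adLin g x) t + LinearMap.lTensor g (adLin g x) t = 0)
    (Z : g ⊗[ℂ] (g ⊗[ℂ] g))
    (hZ : Z = (4 : ℂ)⁻¹ • kap g (t ⊗ₜ[ℂ] t)) :
    ∀ (lam : Module.Dual ℂ g) (n : ℕ), 1 ≤ n →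
      (4 : ℂ) ^ n • Zcontr g lam Z n = (oneAd g (tvee g t lam))^[2 * n - 1] t := by
  intro lam n hn
  obtain ⟨m, rfl⟩ : ∃ m, n = m + 1 := ⟨n - 1, (Nat.succ_pred_eq_of_pos hn).symm⟩
  set x := tvee g t lam with hx
  have hA : Aop g lam Z = (4 : ℂ)⁻¹ • (adLin g x ∘ₗ adLin g x) := by
    rw [hZ, map_smul, lemA t lam hsym hinv]
  have hC : cmid g lam Z = (4 : ℂ)⁻¹ • oneAd g x t := by
    rw [hZ, map_smul, lemB t lam hinv]
  have hR : LinearMap.rTensor g (Aop g lam Z)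
      = (4 : ℂ)⁻¹ • LinearMap.rTensor g (adLin g x ∘ₗ adLin g x) := by
    rw [hA, rT_smul]
  have key : ∀ k : ℕ,
      (⇑(LinearMap.rTensor g (adLin g x ∘ₗ adLin g x)))^[k] (oneAd g x t)
        = (⇑(oneAd g x))^[2 * k + 1] t := by
    intro k
    induction k with
    | zero => simp
    | succ k ih =>
        rw [Function.iterate_succ_apply', ih, show 2 * (k + 1) + 1 = (2 * k + 1) + 2 by ring,
          ← lemE t hinv x (2 * k + 1)]
  simp only [Zcontr, Nat.add_sub_cancel]
  rw [hR, hC, smul_iter, iter_smul, key m, smul_smul, smul_smul,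
    show 2 * (m + 1) - 1 = 2 * m + 1 by omega,
    show (4 : ℂ) ^ (m + 1) * (4 : ℂ)⁻¹ ^ m * (4 : ℂ)⁻¹ = 1 by
      rw [mul_assoc, ← pow_succ, inv_pow]
      exact mul_inv_cancel₀ (pow_ne_zero _ (by norm_num)),
    one_smul]
end

section
/- Let g be a (possibly infinite-dimensional) Lie algebra and Z ∈ g⊗g⊗g a totally antisymmetric g-invariant tensor. Let g_Z ⊆ g be the linear span of the first tensor components of Z. Then g_Z is a finite-dimensional ideal of g, and Z ∈ g_Z ⊗ g_Z ⊗ g_Z. -/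
open TensorProduct

/- STATEMENT 6: For a (possibly infinite-dimensional) Lie algebra `g` and a
totally antisymmetric invariant `Z ∈ g⊗g⊗g`, the span `g_Z` of the first tensor
components of `Z` is a finite-dimensional ideal of `g`, and `Z ∈ g_Z⊗g_Z⊗g_Z`. -/

variable (K : Type*) [Field K] (g : Type*) [LieRing g] [LieAlgebra K g]

/-- transposition of the first two factors of `g ⊗ (g ⊗ g)`. -/
noncomputable def swap12 : g ⊗[K] (g ⊗[K] g) ≃ₗ[K] g ⊗[K] (g ⊗[K] g) :=
  (TensorProduct.assoc K g g g).symm ≪≫ₗ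
    (TensorProduct.congr (TensorProduct.comm K g g) (LinearEquiv.refl K g)) ≪≫ₗ
    TensorProduct.assoc K g g g

/-- transposition of the last two factors of `g ⊗ (g ⊗ g)`. -/
noncomputable def swap23 : g ⊗[K] (g ⊗[K] g) ≃ₗ[K] g ⊗[K] (g ⊗[K] g) :=
  TensorProduct.congr (LinearEquiv.refl K g) (TensorProduct.comm K g g)

/-- the adjoint action of `x` on `g ⊗ (g ⊗ g)` (sum over the three slots). -/
noncomputable def adT (x : g) : g ⊗[K] (g ⊗[K] g) →ₗ[K] g ⊗[K] (g ⊗[K] g) :=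
  LinearMap.rTensor (g ⊗[K] g) ((LieAlgebra.ad K g x : Module.End K g) : g →ₗ[K] g)
    + LinearMap.lTensor g
        (LinearMap.rTensor g ((LieAlgebra.ad K g x : Module.End K g) : g →ₗ[K] g))
    + LinearMap.lTensor g
        (LinearMap.lTensor g ((LieAlgebra.ad K g x : Module.End K g) : g →ₗ[K] g))

/-- contraction of the last two slots of `g ⊗ (g ⊗ g)` with a pair of functionals. -/
noncomputable def contr23 (xi eta : Module.Dual K g) : g ⊗[K] (g ⊗[K] g) →ₗ[K] g :=
  (TensorProduct.rid K g).toLinearMap ∘ₗ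
    LinearMap.lTensor g
      ((TensorProduct.lid K K).toLinearMap ∘ₗ TensorProduct.map xi eta)

/-- the span of the first tensor components of `Z`. -/
noncomputable def gZspan (Z : g ⊗[K] (g ⊗[K] g)) : Submodule K g :=
  Submodule.span K {x : g | ∃ xi eta : Module.Dual K g, x = contr23 K g xi eta Z}

lemma contr23_tmul (xi eta : Module.Dual K g) (x y z : g) :
    contr23 K g xi eta (x ⊗ₜ[K] (y ⊗ₜ[K] z)) = (xi y * eta z) • x := by
  simp [contr23, smul_eq_mul]

lemma contr23_tmul' (xi eta : Module.Dual K g) (x : g) (w : g ⊗[K] g) :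
    contr23 K g xi eta (x ⊗ₜ[K] w)
      = (TensorProduct.lid K K (TensorProduct.map xi eta w)) • x := by
  simp [contr23]

lemma swap12_tmul (x y z : g) :
    swap12 K g (x ⊗ₜ[K] (y ⊗ₜ[K] z)) = y ⊗ₜ[K] (x ⊗ₜ[K] z) := by
  simp [swap12]

lemma swap23_tmul (x y z : g) :
    swap23 K g (x ⊗ₜ[K] (y ⊗ₜ[K] z)) = x ⊗ₜ[K] (z ⊗ₜ[K] y) := by
  simp [swap23]

lemma adT_tmul (x a y z : g) :
    adT K g x (a ⊗ₜ[K] (y ⊗ₜ[K] z))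
      = ⁅x, a⁆ ⊗ₜ[K] (y ⊗ₜ[K] z) + a ⊗ₜ[K] (⁅x, y⁆ ⊗ₜ[K] z) + a ⊗ₜ[K] (y ⊗ₜ[K] ⁅x, z⁆) := by
  simp [adT, LieAlgebra.ad_apply]

lemma contr_adT (x : g) (xi eta : Module.Dual K g) (w : g ⊗[K] (g ⊗[K] g)) :
    contr23 K g xi eta (adT K g x w)
      = ⁅x, contr23 K g xi eta w⁆
        + contr23 K g (xi ∘ₗ ((LieAlgebra.ad K g x : Module.End K g) : g →ₗ[K] g)) eta w
        + contr23 K g xi (eta ∘ₗ ((LieAlgebra.ad K g x : Module.End K g) : g →ₗ[K] g)) w := by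
  induction w using TensorProduct.induction_on with
  | zero => simp
  | add u v hu hv => simp only [map_add, hu, hv, lie_add]; abel
  | tmul a w =>
    induction w using TensorProduct.induction_on with
    | zero => simp
    | add u v hu hv =>
      simp only [TensorProduct.tmul_add, map_add, hu, hv, lie_add]; abel
    | tmul y z =>
      rw [adT_tmul]
      simp only [map_add, contr23_tmul, LinearMap.comp_apply, LinearMap.coe_coe,
        LieAlgebra.ad_apply, lie_smul]

section CoeffLemmas

variable {K g} {ι : Type*} (b : Module.Basis ι K g)

lemma coeff_contr (i j k : ι) (w : g ⊗[K] (g ⊗[K] g)) :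
    b.repr (contr23 K g (b.coord j) (b.coord k) w) i
      = (b.tensorProduct (b.tensorProduct b)).repr w (i, (j, k)) := by
  induction w using TensorProduct.induction_on with
  | zero => simp
  | add u v hu hv => simp only [map_add, Finsupp.add_apply, hu, hv]
  | tmul x w =>
    induction w using TensorProduct.induction_on with
    | zero => simp
    | add u v hu hv => simp only [TensorProduct.tmul_add, map_add, Finsupp.add_apply, hu, hv]
    | tmul y z =>
      rw [contr23_tmul]
      simp only [map_smul, Finsupp.smul_apply, Module.Basis.tensorProduct_repr_tmul_apply,
        Module.Basis.coord_apply, smul_eq_mul]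
      ring

lemma coeff_swap12 (i j k : ι) (w : g ⊗[K] (g ⊗[K] g)) :
    (b.tensorProduct (b.tensorProduct b)).repr (swap12 K g w) (i, (j, k))
      = (b.tensorProduct (b.tensorProduct b)).repr w (j, (i, k)) := by
  induction w using TensorProduct.induction_on with
  | zero => simp
  | add u v hu hv => simp only [map_add, Finsupp.add_apply, hu, hv]
  | tmul x w =>
    induction w using TensorProduct.induction_on with
    | zero => simp
    | add u v hu hv => simp only [TensorProduct.tmul_add, map_add, Finsupp.add_apply, hu, hv]
    | tmul y z =>
      rw [swap12_tmul]
      simp only [Module.Basis.tensorProduct_repr_tmul_apply, smul_eq_mul]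
      ring

lemma coeff_swap23 (i j k : ι) (w : g ⊗[K] (g ⊗[K] g)) :
    (b.tensorProduct (b.tensorProduct b)).repr (swap23 K g w) (i, (j, k))
      = (b.tensorProduct (b.tensorProduct b)).repr w (i, (k, j)) := by
  induction w using TensorProduct.induction_on with
  | zero => simp
  | add u v hu hv => simp only [map_add, Finsupp.add_apply, hu, hv]
  | tmul x w =>
    induction w using TensorProduct.induction_on with
    | zero => simp
    | add u v hu hv => simp only [TensorProduct.tmul_add, map_add, Finsupp.add_apply, hu, hv]
    | tmul y z =>
      rw [swap23_tmul]
      simp only [Module.Basis.tensorProduct_repr_tmul_apply, smul_eq_mul]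
      ring

end CoeffLemmas

theorem stmt_6 (Z : g ⊗[K] (g ⊗[K] g))
    (hanti12 : swap12 K g Z = -Z) (hanti23 : swap23 K g Z = -Z)
    (hinv : ∀ x : g, adT K g x Z = 0) :
    FiniteDimensional K (gZspan K g Z) ∧
    (∀ x : g, ∀ y ∈ gZspan K g Z, ⁅x, y⁆ ∈ gZspan K g Z) ∧
    Z ∈ LinearMap.range
      (TensorProduct.map (gZspan K g Z).subtype
        (TensorProduct.map (gZspan K g Z).subtype (gZspan K g Z).subtype)) := by
  classical
  have hgen : ∀ xi eta : Module.Dual K g, contr23 K g xi eta Z ∈ gZspan K g Z :=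
    fun xi eta => Submodule.subset_span ⟨xi, eta, rfl⟩
  -- the ideal property
  have hideal : ∀ x : g, ∀ y ∈ gZspan K g Z, ⁅x, y⁆ ∈ gZspan K g Z := by
    intro x y hy
    induction hy using Submodule.span_induction with
    | mem y hy =>
      obtain ⟨xi, eta, rfl⟩ := hy
      have h := contr_adT K g x xi eta Z
      rw [hinv x, map_zero] at h
      have h' : ⁅x, contr23 K g xi eta Z⁆
          = -(contr23 K g (xi ∘ₗ ((LieAlgebra.ad K g x : Module.End K g) : g →ₗ[K] g)) eta Z
              + contr23 K g xi
                  (eta ∘ₗ ((LieAlgebra.ad K g x : Module.End K g) : g →ₗ[K] g)) Z) := by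
        have h2 := h.symm
        rw [add_assoc] at h2
        exact eq_neg_of_add_eq_zero_left h2
      rw [h']
      exact neg_mem (add_mem (hgen _ _) (hgen _ _))
    | zero => simp
    | add u v hu hv h1 h2 => rw [lie_add]; exact add_mem h1 h2
    | smul a u hu h1 => rw [lie_smul]; exact Submodule.smul_mem _ _ h1
  -- finite dimensionality
  have hfin : FiniteDimensional K (gZspan K g Z) := by
    obtain ⟨S, hS⟩ := TensorProduct.exists_finset Z
    have hle : gZspan K g Z ≤ Submodule.span K ((S.image Prod.fst : Finset g) : Set g) := by
      apply Submodule.span_le.2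
      rintro _ ⟨xi, eta, rfl⟩
      rw [hS, map_sum]
      refine Submodule.sum_mem _ fun p hp => ?_
      rw [contr23_tmul']
      exact Submodule.smul_mem _ _
        (Submodule.subset_span (Finset.mem_coe.2 (Finset.mem_image_of_mem Prod.fst hp)))
    exact Submodule.finiteDimensional_of_le hle
  refine ⟨hfin, hideal, ?_⟩
  -- adapted basis
  set V := gZspan K g Z with hVdef
  have hli : LinearIndepOn K id
      (Subtype.val '' (Module.Basis.ofVectorSpaceIndex K V) : Set g) := by
    have h1 := (Module.Basis.ofVectorSpace K V).linearIndependent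
    have h2 := h1.map' V.subtype (Submodule.ker_subtype V)
    have h3 := h2.linearIndepOn_id
    rwa [Set.range_comp, Module.Basis.range_ofVectorSpace, Submodule.coe_subtype] at h3
  set sV : Set g := Subtype.val '' (Module.Basis.ofVectorSpaceIndex K V) with hsVdef
  set b := Module.Basis.extend hli with hbdef
  have hbc : ⇑b = ((↑) : hli.extend (Set.subset_univ sV) → g) := Module.Basis.coe_extend hli
  have hsub : sV ⊆ hli.extend (Set.subset_univ sV) := hli.subset_extend _
  have hspan : Submodule.span K sV = V := by
    rw [hsVdef, ← Submodule.coe_subtype, Submodule.span_image,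
      ← Module.Basis.range_ofVectorSpace K V, Module.Basis.span_eq, Submodule.map_subtype_top]
  set s₀ : Set (hli.extend (Set.subset_univ sV)) := Subtype.val ⁻¹' sV with hs₀def
  have himg : b '' s₀ = sV := by
    rw [hbc, hs₀def, Subtype.image_preimage_coe, Set.inter_eq_self_of_subset_right hsub]
  have hsupp : ∀ v ∈ V, ∀ i, i ∉ s₀ → b.repr v i = 0 := by
    intro v hv i hi
    have hvm : v ∈ Submodule.span K (b '' s₀) := by rw [himg, hspan]; exact hv
    have hs := (Module.Basis.mem_span_image b).1 hvm
    by_contra h0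
    exact hi (hs (Finsupp.mem_support_iff.2 h0))
  set B := b.tensorProduct (b.tensorProduct b) with hBdef
  set c := B.repr Z with hcdef
  have h12 : ∀ i j k, c (j, (i, k)) = - c (i, (j, k)) := by
    intro i j k
    have h := coeff_swap12 b i j k Z
    rw [hanti12] at h
    simpa using h.symm
  have h23 : ∀ i j k, c (i, (k, j)) = - c (i, (j, k)) := by
    intro i j k
    have h := coeff_swap23 b i j k Z
    rw [hanti23] at h
    simpa using h.symm
  have hz : ∀ i j k, i ∉ s₀ → c (i, (j, k)) = 0 := by
    intro i j k hi
    rw [hcdef, hBdef, ← coeff_contr b i j k Z]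
    exact hsupp _ (hgen _ _) i hi
  have hmemV : ∀ i, i ∈ s₀ → b i ∈ V := by
    intro i hi
    rw [hbc, ← hspan]
    exact Submodule.subset_span hi
  have hkey : ∀ p ∈ c.support, p.1 ∈ s₀ ∧ p.2.1 ∈ s₀ ∧ p.2.2 ∈ s₀ := by
    rintro ⟨i, j, k⟩ hp
    have hc : c (i, (j, k)) ≠ 0 := Finsupp.mem_support_iff.1 hp
    refine ⟨?_, ?_, ?_⟩
    · by_contra hi
      exact hc (hz i j k hi)
    · by_contra hj
      have := hz j i k hj
      rw [h12 i j k] at this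
      exact hc (neg_eq_zero.1 this)
    · by_contra hk
      have h1 := hz k i j hk
      rw [h12 i k j, h23 i j k, neg_neg] at h1
      exact hc h1
  have hZrepr : Z = c.sum fun p a => a • B p := by
    conv_lhs => rw [← B.linearCombination_repr Z]
    rw [Finsupp.linearCombination_apply]
  rw [hZrepr, Finsupp.sum]
  refine Submodule.sum_mem _ fun p hp => ?_
  obtain ⟨hi, hj, hk⟩ := hkey p hp
  refine Submodule.smul_mem _ _ ?_
  refine ⟨(⟨b p.1, hmemV _ hi⟩ : V) ⊗ₜ[K]
    ((⟨b p.2.1, hmemV _ hj⟩ : V) ⊗ₜ[K] (⟨b p.2.2, hmemV _ hk⟩ : V)), ?_⟩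
  rw [hBdef, Module.Basis.tensorProduct_apply', Module.Basis.tensorProduct_apply']
  simp [TensorProduct.map_tmul]
end
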